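/- Let A be an n×n real matrix and C a p×n real matrix with rank(C) = n. If s̃ is an integer with s̃ ≥ max{1, n − rank(A)} and K̃ is an integer with K̃ ≥ ⌈n/s̃⌉, then there exist subsets S̃_0, …, S̃_{K̃−1} of {1, …, p} with |S̃_k| ≤ s̃ for all k such that the scheduled observability matrix, obtained by vertically stacking the blocks C_{S̃_k} A^k for k = 0, 1, …, K̃−1, has rank n (here C_{S̃_k} denotes the submatrix of C formed by the rows indexed by S̃_k). -/

import Mathlib

/-! Since `ker C = 0`, the rows of `C * A ^ k` span a space of dimension `rank (A ^ k)`, and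
Sylvester's inequality `rank (A ^ k) ≥ n - k * (n - rank A) ≥ n - k * s̃` bounds it from below.
Choose the rows greedily from the last block `k = K̃ - 1` down to `k = 0`: at block `k`, at
most `s̃` new rows either enlarge the accumulated span by `s̃` dimensions or absorb the whole row
space of `C * A ^ k`. Either way the span keeps dimension at least `n - k * s̃`, which starts at
`n - K̃ * s̃ ≤ 0` and ends at `n`. -/
open Matrix Module Submodule

section
variable {𝕜 V W : Type*} [Field 𝕜] [AddCommGroup V] [Module 𝕜 V] [FiniteDimensional 𝕜 V]
  [AddCommGroup W] [Module 𝕜 W]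

theorem Submodule.finrank_le_finrank_map_add_finrank_ker (f : V →ₗ[𝕜] W) (U : Submodule 𝕜 V) :
    finrank 𝕜 U ≤ finrank 𝕜 (U.map f) + finrank 𝕜 (LinearMap.ker f) := by
  have hker : finrank 𝕜 ((LinearMap.ker f).comap U.subtype) ≤ finrank 𝕜 (LinearMap.ker f) :=
    calc finrank 𝕜 ((LinearMap.ker f).comap U.subtype)
        = finrank 𝕜 (((LinearMap.ker f).comap U.subtype).map U.subtype) :=
          (finrank_map_subtype_eq _ _).symm
      _ ≤ finrank 𝕜 (LinearMap.ker f) := finrank_mono (map_comap_le _ _)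
  have hrn := (f.domRestrict U).finrank_range_add_finrank_ker
  rw [LinearMap.range_domRestrict, LinearMap.ker_domRestrict] at hrn
  omega

end

namespace Matrix

variable {𝕜 l m n : Type*} [Field 𝕜] [Fintype m] [Fintype n]

theorem rank_le_rank_mul_add (C : Matrix l m 𝕜) (B : Matrix m n 𝕜) :
    B.rank ≤ (C * B).rank + (Fintype.card m - C.rank) := by
  have hker : finrank 𝕜 (LinearMap.ker C.mulVecLin) = Fintype.card m - C.rank := by
    have hrn := C.mulVecLin.finrank_range_add_finrank_ker
    rw [finrank_fintype_fun_eq_card] at hrn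
    unfold Matrix.rank
    omega
  have h := finrank_le_finrank_map_add_finrank_ker C.mulVecLin (LinearMap.range B.mulVecLin)
  rwa [← LinearMap.range_comp, ← mulVecLin_mul, hker] at h

theorem card_le_rank_pow_add_mul [DecidableEq n] (A : Matrix n n 𝕜) (k : ℕ) :
    Fintype.card n ≤ (A ^ k).rank + k * (Fintype.card n - A.rank) := by
  induction k with
  | zero => simp [rank_one]
  | succ k ih =>
    have h := rank_le_rank_mul_add A (A ^ k)
    rw [← pow_succ'] at h
    rw [add_one_mul]
    omega

end Matrix

section
variable {𝕜 V ι : Type*} [Field 𝕜] [AddCommGroup V] [Module 𝕜 V] [FiniteDimensional 𝕜 V]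

theorem Submodule.exists_finset_card_le_min_le_finrank_sup_span (U : Submodule 𝕜 V) (v : ι → V)
    (s : ℕ) : ∃ S : Finset ι, S.card ≤ s ∧
      min (finrank 𝕜 U + s) (finrank 𝕜 ↥(U ⊔ span 𝕜 (Set.range v)))
        ≤ finrank 𝕜 ↥(U ⊔ span 𝕜 (v '' S)) := by
  classical
  induction s with
  | zero =>
    exact ⟨∅, le_rfl, (min_le_left _ _).trans (finrank_mono le_sup_left)⟩
  | succ s ih =>
    obtain ⟨S, hS, hmin⟩ := ih
    set W := U ⊔ span 𝕜 (v '' S)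
    by_cases hall : ∀ i, v i ∈ W
    · have hle : U ⊔ span 𝕜 (Set.range v) ≤ W :=
        sup_le le_sup_left (span_le.mpr (Set.range_subset_iff.mpr hall))
      exact ⟨S, hS.trans s.le_succ, (min_le_right _ _).trans (finrank_mono hle)⟩
    obtain ⟨i, hi⟩ := not_forall.mp hall
    have hlt : W < W ⊔ span 𝕜 {v i} :=
      lt_of_le_of_ne le_sup_left fun h => hi (h ▸ mem_sup_right (mem_span_singleton_self _))
    have hW : U ⊔ span 𝕜 (v '' ↑(insert i S)) = W ⊔ span 𝕜 {v i} := by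
      rw [Finset.coe_insert, Set.image_insert_eq, span_insert, sup_comm (span 𝕜 {v i}),
        ← sup_assoc]
    refine ⟨insert i S, (Finset.card_insert_le _ _).trans (by omega), ?_⟩
    rw [hW]
    have := finrank_lt_finrank_of_lt hlt
    omega

theorem Submodule.exists_schedule_le_finrank_sup (v : ℕ → ι → V) (s N K : ℕ)
    (U : Submodule 𝕜 V)
    (hblocks : ∀ k < K, N ≤ finrank 𝕜 ↥(U ⊔ span 𝕜 (Set.range (v k))) + k * s)
    (hN : N ≤ finrank 𝕜 U + K * s) :
    ∃ S : ℕ → Finset ι, (∀ k, (S k).card ≤ s) ∧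
      N ≤ finrank 𝕜 ↥(U ⊔ ⨆ k < K, span 𝕜 (v k '' S k)) := by
  induction K generalizing U with
  | zero =>
    exact ⟨fun _ => ∅, by simp, le_trans (by simpa using hN) (finrank_mono le_sup_left)⟩
  | succ K ih =>
    obtain ⟨T, hT, hmin⟩ := exists_finset_card_le_min_le_finrank_sup_span U (v K) s
    set U' := U ⊔ span 𝕜 (v K '' T)
    have hU' : N ≤ finrank 𝕜 U' + K * s := by
      have := hblocks K K.lt_succ_self
      have := min_le_iff.mp hmin
      rw [add_one_mul] at hN
      omega
    obtain ⟨S, hS, hNS⟩ := ih U' (fun k hk => (hblocks k (by omega)).trans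
      (by gcongr; exact finrank_mono (sup_le_sup_right le_sup_left _))) hU'
    refine ⟨Function.update S K T, fun k => ?_, ?_⟩
    · rcases eq_or_ne k K with rfl | hk
      · simpa using hT
      · simpa [hk] using hS k
    · refine hNS.trans (finrank_mono (sup_le (sup_le le_sup_left ?_) (iSup₂_le fun k hk => ?_)))
      · exact le_sup_of_le_right (le_iSup₂_of_le K K.lt_succ_self (by simp))
      · exact le_sup_of_le_right
          (le_iSup₂_of_le k (by omega) (by rw [Function.update_of_ne hk.ne]))

end

theorem stmt_10 {n p : ℕ} (A : Matrix (Fin n) (Fin n) ℝ) (C : Matrix (Fin p) (Fin n) ℝ)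
    (hC : C.rank = n) (st Kt : ℕ) (hst : max 1 (n - A.rank) ≤ st)
    (hKt : (⌈(n : ℚ) / (st : ℚ)⌉ : ℤ) ≤ (Kt : ℤ)) :
    ∃ St : Fin Kt → Finset (Fin p), (∀ k : Fin Kt, (St k).card ≤ st) ∧
      Matrix.rank (Matrix.of fun (q : Σ k : Fin Kt, {j : Fin p // j ∈ St k}) (i : Fin n) =>
        (C * A ^ ((q.1 : ℕ))) q.2.val i) = n := by
  obtain ⟨hst_pos, hst_nullity⟩ := max_le_iff.mp hst
  have hn : n ≤ Kt * st := by
    have h := Int.ceil_le.mp hKt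
    rw [div_le_iff₀ (by exact_mod_cast hst_pos)] at h
    exact_mod_cast h
  have hblocks : ∀ k < Kt,
      n ≤ finrank ℝ ↥(⊥ ⊔ span ℝ (Set.range (C * A ^ k).row)) + k * st := by
    intro k _
    have hCA := rank_le_rank_mul_add C (A ^ k)
    have hAk := card_le_rank_pow_add_mul A k
    rw [Fintype.card_fin] at hCA hAk
    rw [hC] at hCA
    rw [bot_sup_eq, ← rank_eq_finrank_span_row]
    have := Nat.mul_le_mul_left k hst_nullity
    omega
  obtain ⟨S, hS, hN⟩ := exists_schedule_le_finrank_sup (fun k => (C * A ^ k).row) st n Kt ⊥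
    hblocks (by simpa using hn)
  refine ⟨fun k => S k, fun k => hS k,
    le_antisymm ((rank_le_card_width _).trans_eq (Fintype.card_fin n)) ?_⟩
  rw [bot_sup_eq] at hN
  rw [rank_eq_finrank_span_row]
  refine hN.trans (finrank_mono (iSup₂_le fun k hk => span_mono ?_))
  rintro _ ⟨i, hi, rfl⟩
  exact ⟨⟨⟨k, hk⟩, i, hi⟩, rfl⟩
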